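/- arXiv:1511.00562 — 4 statements merged into one kernel-verified Lean document; each statement's English description precedes it below -/
import Mathlib

section
/- Let h be a positive integer with d_max ≤ h and let v ∈ F₂^h have Hamming weight l with 1 ≤ l ≤ h. If a random column c ∈ F₂^h is drawn according to the LT column distribution, then the probability that the inner product vᵀc equals 1 (in F₂) is exactly p_l = Σ_{j=1}^{d_max} Ω_j · Σ_{i odd, max(1, l+j−h) ≤ i ≤ min(l,j)} C(l,i)·C(h−l, j−i)/C(h,j). -/
/-!
Identify a column `c ∈ F₂^h` with its support `S`, so that `hammingNorm c = #S` and
`vᵀc = #(S ∩ V) mod 2`, where `V` is the support of `v`. Conditioning on the degree `j`, the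
probability is `Ω j / C(h,j)` times the number of `j`-subsets `S` with `#(S ∩ V)` odd; splitting
such `S` into `S ∩ V` and `S \ V` shows that exactly `C(l,i) · C(h-l,j-i)` of them have
`#(S ∩ V) = i`.
-/

open Finset

/-- Probability that the LT column distribution on `F₂^h` produces the particular
column `c`: a degree `j ∈ {1,…,dmax}` is drawn with probability `Ω j` and then one
of the `C(h,j)` vectors of Hamming weight `j` is chosen uniformly at random. -/
noncomputable def colP (dmax : ℕ) (Ω : ℕ → ℝ) {h : ℕ} (c : Fin h → ZMod 2) : ℝ :=
  if 1 ≤ hammingNorm c ∧ hammingNorm c ≤ dmax then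
    Ω (hammingNorm c) / (h.choose (hammingNorm c)) else 0

section

variable {α : Type*} [Fintype α] [DecidableEq α]

theorem card_powersetCard_filter_card_inter_eq (V : Finset α) {i j : ℕ} (hij : i ≤ j) :
    #{S ∈ powersetCard j univ | #(S ∩ V) = i} =
      (#V).choose i * (Fintype.card α - #V).choose (j - i) := by
  rw [← card_compl, ← card_powersetCard, ← card_powersetCard, ← card_product]
  refine card_nbij' (fun S => (S ∩ V, S \ V)) (fun p => p.1 ∪ p.2) ?_ ?_ ?_ ?_
  · intro S hS
    simp only [mem_coe, mem_filter, mem_product, mem_powersetCard] at hS ⊢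
    have := card_sdiff_add_card_inter S V
    refine ⟨⟨inter_subset_right, hS.2⟩, fun x hx => ?_, by omega⟩
    simp_all
  · rintro ⟨A, B⟩ hAB
    simp only [mem_coe, mem_filter, mem_product, mem_powersetCard,
      subset_compl_iff_disjoint_right] at hAB ⊢
    obtain ⟨⟨hAV, rfl⟩, hBV, hB⟩ := hAB
    rw [card_union_of_disjoint (hBV.symm.mono_left hAV), union_inter_distrib_right,
      inter_eq_left.2 hAV, disjoint_iff_inter_eq_empty.1 hBV, union_empty]
    exact ⟨⟨subset_univ _, by omega⟩, rfl⟩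
  · intro S _
    exact (union_comm _ _).trans (sdiff_union_inter S V)
  · rintro ⟨A, B⟩ hAB
    simp only [mem_coe, mem_product, mem_powersetCard, subset_compl_iff_disjoint_right] at hAB
    obtain ⟨⟨hAV, -⟩, hBV, -⟩ := hAB
    simp only [union_inter_distrib_right, union_sdiff_distrib, inter_eq_left.2 hAV,
      disjoint_iff_inter_eq_empty.1 hBV, sdiff_eq_empty_iff_subset.2 hAV, hBV.sdiff_eq_left,
      union_empty, empty_union]

theorem card_powersetCard_filter_odd_card_inter (V : Finset α) (j : ℕ) :
    #{S ∈ powersetCard j univ | Odd #(S ∩ V)} =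
      ∑ i ∈ Icc (max 1 (#V + j - Fintype.card α)) (min #V j) with Odd i,
        (#V).choose i * (Fintype.card α - #V).choose (j - i) := by
  rw [card_eq_sum_card_fiberwise (f := fun S => #(S ∩ V))]
  · refine sum_congr rfl fun i hi => ?_
    simp only [mem_filter, mem_Icc, le_min_iff] at hi
    rw [filter_filter, ← card_powersetCard_filter_card_inter_eq V hi.1.2.2]
    congr 1
    exact filter_congr fun S _ => ⟨And.right, fun h => ⟨h ▸ hi.2, h⟩⟩
  -- `#(S ∩ V) ≥ #S + #V - card α` because `#(S ∪ V) + #(S ∩ V) = #S + #V`.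
  · intro S hS
    simp only [coe_filter, mem_powersetCard_univ, Set.mem_ofPred_eq] at hS
    obtain ⟨rfl, hodd⟩ := hS
    have := card_union_add_card_inter S V
    have := card_le_univ (S ∪ V)
    have := card_le_card (inter_subset_left (s₁ := S) (s₂ := V))
    have := card_le_card (inter_subset_right (s₁ := S) (s₂ := V))
    simp only [coe_filter, mem_Icc, Set.mem_ofPred_eq, max_le_iff, le_min_iff]
    exact ⟨⟨⟨hodd.pos, by omega⟩, by omega, by omega⟩, hodd⟩

def finsetEquivZModTwo : Finset α ≃ (α → ZMod 2) where
  toFun S x := if x ∈ S then 1 else 0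
  invFun c := {x | c x = 1}
  left_inv S := by ext; simp
  right_inv c := by
    funext x
    have : ∀ a : ZMod 2, (if a = 1 then 1 else 0) = a := by decide
    simpa using this (c x)

@[simp]
theorem hammingNorm_finsetEquivZModTwo (S : Finset α) :
    hammingNorm (finsetEquivZModTwo S) = #S := by
  simp [finsetEquivZModTwo, hammingNorm]

@[simp]
theorem finsetEquivZModTwo_dotProduct (S T : Finset α) :
    finsetEquivZModTwo S ⬝ᵥ finsetEquivZModTwo T = (#(S ∩ T) : ZMod 2) := by
  simp only [finsetEquivZModTwo, Equiv.coe_fn_mk, dotProduct, mul_boole, ← ite_and, sum_boole]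
  congr 2
  ext
  simp [and_comm]

theorem card_filter_dotProduct_eq_one_hammingNorm_eq (v : α → ZMod 2) (j : ℕ) :
    #{c | v ⬝ᵥ c = 1 ∧ hammingNorm c = j} =
      ∑ i ∈ Icc (max 1 (hammingNorm v + j - Fintype.card α)) (min (hammingNorm v) j) with Odd i,
        (hammingNorm v).choose i * (Fintype.card α - hammingNorm v).choose (j - i) := by
  obtain ⟨V, rfl⟩ := finsetEquivZModTwo.surjective v
  rw [hammingNorm_finsetEquivZModTwo, ← card_powersetCard_filter_odd_card_inter]
  refine card_equiv finsetEquivZModTwo.symm fun c => ?_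
  obtain ⟨S, rfl⟩ := finsetEquivZModTwo.surjective c
  simp [ZMod.natCast_eq_one_iff_odd, inter_comm, and_comm]

end

theorem colP_eq_sum_ite (dmax : ℕ) (Ω : ℕ → ℝ) {h : ℕ} (c : Fin h → ZMod 2) :
    colP dmax Ω c =
      ∑ j ∈ Icc 1 dmax, if hammingNorm c = j then Ω j / (h.choose j : ℝ) else 0 := by
  rw [sum_ite_eq, colP]
  simp only [mem_Icc]

theorem stmt_1_general (dmax h : ℕ) (Ω : ℕ → ℝ)
    (v : Fin h → ZMod 2) (l : ℕ) (hwt : hammingNorm v = l) :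
    ∑ c ∈ Finset.univ.filter (fun c : Fin h → ZMod 2 => dotProduct v c = 1),
      colP dmax Ω c =
    ∑ j ∈ Finset.Icc 1 dmax, Ω j *
      ∑ i ∈ (Finset.Icc (max 1 (l + j - h)) (min l j)).filter (fun i => Odd i),
        ((l.choose i : ℝ) * ((h - l).choose (j - i) : ℝ)) / (h.choose j : ℝ) := by
  simp_rw [colP_eq_sum_ite]
  rw [sum_comm]
  refine sum_congr rfl fun j _ => ?_
  rw [← sum_filter, filter_filter, sum_const, nsmul_eq_mul,
    card_filter_dotProduct_eq_one_hammingNorm_eq, Fintype.card_fin, hwt, Nat.cast_sum,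
    sum_mul, mul_sum]
  refine sum_congr rfl fun i _ => ?_
  push_cast
  ring

/-- If `v ∈ F₂^h` has Hamming weight `l` with `1 ≤ l ≤ h` and a random column
`c ∈ F₂^h` is drawn according to the LT column distribution, then the probability
that the inner product `vᵀc` equals `1` is exactly
`p_l = Σ_{j=1}^{dmax} Ω_j · Σ_{i odd, max(1,l+j−h) ≤ i ≤ min(l,j)} C(l,i)·C(h−l,j−i)/C(h,j)`. -/
theorem stmt_1 (dmax h : ℕ) (Ω : ℕ → ℝ)
    (hΩpos : ∀ j ∈ Finset.Icc 1 dmax, 0 ≤ Ω j)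
    (hΩsum : ∑ j ∈ Finset.Icc 1 dmax, Ω j = 1)
    (hpos : 0 < h) (hdh : dmax ≤ h)
    (v : Fin h → ZMod 2) (l : ℕ) (hwt : hammingNorm v = l) (hl1 : 1 ≤ l) (hlh : l ≤ h) :
    ∑ c ∈ Finset.univ.filter (fun c : Fin h → ZMod 2 => dotProduct v c = 1),
      colP dmax Ω c =
    ∑ j ∈ Finset.Icc 1 dmax, Ω j *
      ∑ i ∈ (Finset.Icc (max 1 (l + j - h)) (min l j)).filter (fun i => Odd i),
        ((l.choose i : ℝ) * ((h - l).choose (j - i) : ℝ)) / (h.choose j : ℝ) :=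
  stmt_1_general dmax h Ω v l hwt
end

section
/- (Theorem 1) Let h, k, n be positive integers with k ≤ h and d_max ≤ h, and consider the fixed-rate Raptor ensemble with parameters (h,k,n): H is an (h−k)×h matrix over F₂ with i.i.d. uniform entries, G ∈ F₂^{h×n} is an independent random LT generator matrix. Then for every d ≥ 1 the expected number of intermediate words v ∈ F₂^h with Hv = 0 and wt(vᵀG) = d equals A_d = C(n,d)·2^{−(h−k)}·Σ_{l=1}^{h} C(h,l)·p_l^{d}·(1−p_l)^{n−d}. -/
open Finset

/-- `p_{j,l} = Σ_{i odd, max(1, l+j−h) ≤ i ≤ min(l,j)} C(j,i)·C(h−j, l−i)/C(h,l)`. -/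
noncomputable def pjl (h j l : ℕ) : ℝ :=
  ∑ i ∈ (Finset.Icc (max 1 (l + j - h)) (min l j)).filter (fun i => Odd i),
    ((j.choose i : ℝ) * ((h - j).choose (l - i) : ℝ)) / (h.choose l : ℝ)

/-- `p_l = Σ_{j=1}^{dmax} Ω_j · p_{j,l}`. -/
noncomputable def pl (dmax : ℕ) (Ω : ℕ → ℝ) (h l : ℕ) : ℝ :=
  ∑ j ∈ Finset.Icc 1 dmax, Ω j * pjl h j l

/-!
By linearity of expectation and independence of `H` and `G`, the expected count is
`∑ v, P(H v = 0) · P(wt(vᵀ G) = d)`. For `v ≠ 0` the map `H ↦ H v` is a surjective linear map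
onto `F₂^(h-k)`, so `P(H v = 0) = 2^(-(h-k))`. The columns of `G` are i.i.d., so `wt(vᵀ G)` is
binomial with parameter `P(v ⬝ c ≠ 0)` for an LT column `c`; counting the supports `S` of size `j`
with `|supp v ∩ S|` odd identifies this parameter with `p_(wt v)`. Finally there are `C(h,l)`
vectors of weight `l`, and `v = 0` contributes nothing because `d ≥ 1` and `p_0 = 0`.
-/

lemma ZMod.two_eq_zero_or_eq_one (x : ZMod 2) : x = 0 ∨ x = 1 := by
  revert x; decide

section Supports

variable {ι : Type*} [Fintype ι] [DecidableEq ι]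

def supportEquiv : (ι → ZMod 2) ≃ Finset ι where
  toFun c := {i | c i ≠ 0}
  invFun S i := if i ∈ S then 1 else 0
  left_inv c := by
    funext i
    rcases (c i).two_eq_zero_or_eq_one with h | h <;> simp [h]
  right_inv S := by ext i; by_cases hi : i ∈ S <;> simp [hi]

lemma hammingNorm_eq_card_supportEquiv (c : ι → ZMod 2) :
    hammingNorm c = #(supportEquiv c) := rfl

lemma dotProduct_eq_card_inter (v c : ι → ZMod 2) :
    v ⬝ᵥ c = #(supportEquiv v ∩ supportEquiv c) := by
  have hS : supportEquiv v ∩ supportEquiv c = ({i | v i ≠ 0 ∧ c i ≠ 0} : Finset ι) := by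
    ext; simp [supportEquiv]
  rw [hS, natCast_card_filter]
  refine sum_congr rfl fun i _ => ?_
  rcases (v i).two_eq_zero_or_eq_one with h1 | h1 <;>
    rcases (c i).two_eq_zero_or_eq_one with h2 | h2 <;> simp [h1, h2]

lemma dotProduct_ne_zero_iff_odd_card_inter (v c : ι → ZMod 2) :
    v ⬝ᵥ c ≠ 0 ↔ Odd #(supportEquiv v ∩ supportEquiv c) := by
  rw [dotProduct_eq_card_inter, Ne, ZMod.natCast_eq_zero_iff, Nat.two_dvd_ne_zero, Nat.odd_iff]

lemma card_filter_hammingNorm_eq (l : ℕ) :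
    #{c : ι → ZMod 2 | hammingNorm c = l} = (Fintype.card ι).choose l := by
  rw [← card_univ, ← card_powersetCard]
  exact card_equiv supportEquiv fun c => by
    simp only [mem_filter, mem_univ, true_and, mem_powersetCard_univ]; rfl

lemma sum_hammingNorm_eq {M : Type*} [AddCommMonoid M] (F : ℕ → M) :
    ∑ c : ι → ZMod 2, F (hammingNorm c) =
      ∑ l ∈ range (Fintype.card ι + 1), (Fintype.card ι).choose l • F l := by
  rw [← sum_fiberwise_of_maps_to (g := hammingNorm) (t := range (Fintype.card ι + 1))
    fun c _ => mem_range_succ_iff.mpr hammingNorm_le_card_fintype]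
  refine sum_congr rfl fun l _ => ?_
  rw [sum_congr rfl fun c hc => congrArg F (mem_filter.mp hc).2, sum_const,
    card_filter_hammingNorm_eq]

lemma card_filter_card_inter_eq (V : Finset ι) {i j : ℕ} (hij : i ≤ j) :
    #{S ∈ powersetCard j univ | #(V ∩ S) = i} =
      (#V).choose i * (Fintype.card ι - #V).choose (j - i) := by
  rw [← card_powersetCard, ← card_compl, ← card_powersetCard, ← card_product]
  have hsplit (P Q : Finset ι) (hP : P ⊆ V) (hQ : Q ⊆ Vᶜ) :
      V ∩ (P ∪ Q) = P ∧ (P ∪ Q) \ V = Q := by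
    constructor <;> ext x <;> have := @hP x <;> have := @hQ x <;>
      simp only [mem_inter, mem_union, mem_sdiff, mem_compl] at * <;> tauto
  refine card_nbij' (fun S => (V ∩ S, S \ V)) (fun P => P.1 ∪ P.2) ?_ ?_ ?_ ?_
  · intro S hS
    simp only [coe_filter, mem_powersetCard_univ, Set.mem_ofPred_eq] at hS
    simp only [coe_product, Set.mem_prod, mem_coe, mem_powersetCard]
    refine ⟨⟨inter_subset_left, hS.2⟩, fun x hx => ?_, ?_⟩
    · simp_all
    · rw [← hS.1, ← hS.2, ← card_inter_add_card_sdiff S V, inter_comm]; omega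
  · rintro ⟨P, Q⟩ hPQ
    obtain ⟨⟨hP, hPi⟩, hQ, hQj⟩ := by
      simpa only [mem_coe, mem_product, mem_powersetCard] using hPQ
    simp only [coe_filter, mem_powersetCard_univ, Set.mem_ofPred_eq]
    have hdisj : Disjoint P Q :=
      disjoint_of_subset_left hP (subset_compl_iff_disjoint_left.mp hQ)
    rw [card_union_of_disjoint hdisj, (hsplit P Q hP hQ).1]
    omega
  · intro S _
    ext; simp only [mem_union, mem_inter, mem_sdiff]; tauto
  · rintro ⟨P, Q⟩ hPQ
    obtain ⟨⟨hP, -⟩, hQ, -⟩ := by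
      simpa only [mem_coe, mem_product, mem_powersetCard] using hPQ
    simp [hsplit P Q hP hQ]

end Supports

/-- Both sides count the pairs `(V, S)` of subsets of `Fin h` with `#V = l`, `#S = j` and
`#(V ∩ S) = i`. -/
theorem Nat.choose_mul_choose_mul_choose_comm {h l j i : ℕ} (hil : i ≤ l) (hij : i ≤ j) :
    h.choose l * (l.choose i * (h - l).choose (j - i)) =
      h.choose j * (j.choose i * (h - j).choose (l - i)) := by
  have count (a b : ℕ) (hib : i ≤ b) :
      ∑ V ∈ powersetCard a (univ : Finset (Fin h)),
          #{S ∈ powersetCard b univ | #(V ∩ S) = i} =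
        h.choose a * (a.choose i * (h - a).choose (b - i)) := by
    rw [sum_congr rfl fun V hV => by
      rw [card_filter_card_inter_eq V hib, mem_powersetCard_univ.mp hV, Fintype.card_fin],
      sum_const, card_powersetCard, Finset.card_univ, Fintype.card_fin, smul_eq_mul]
  rw [← count l j hij, ← count j l hil]
  simp only [card_filter]
  rw [sum_comm]
  simp only [inter_comm]

section OddIntersections

variable {h : ℕ}

lemma card_filter_odd_card_inter (V : Finset (Fin h)) (j : ℕ) :
    #{S ∈ powersetCard j univ | Odd #(V ∩ S)} =
      ∑ i ∈ {i ∈ Icc (max 1 (#V + j - h)) (min #V j) | Odd i},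
        (#V).choose i * (h - #V).choose (j - i) := by
  rw [card_eq_sum_card_fiberwise (f := fun S => #(V ∩ S)) fun S hS => ?_]
  · refine sum_congr rfl fun i hi => ?_
    obtain ⟨hi, hodd⟩ := mem_filter.mp hi
    have hcount := card_filter_card_inter_eq V (le_trans (mem_Icc.mp hi).2 (min_le_right _ _))
    rw [Fintype.card_fin] at hcount
    rw [filter_filter, ← hcount]
    congr 1
    exact filter_congr fun S _ => ⟨fun hS => hS.2, fun hS => ⟨hS ▸ hodd, hS⟩⟩
  · obtain ⟨hS, hodd⟩ := mem_filter.mp hS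
    have := card_union_add_card_inter V S
    have := card_le_univ (V ∪ S)
    have := card_le_card (inter_subset_left (s₁ := V) (s₂ := S))
    have := card_le_card (inter_subset_right (s₁ := V) (s₂ := S))
    have := hodd.pos
    simp only [coe_filter, Set.mem_ofPred_eq, mem_Icc, hodd, and_true, Fintype.card_fin,
      mem_powersetCard_univ.mp hS] at *
    omega

lemma card_filter_odd_card_inter_div_choose (V : Finset (Fin h)) {j : ℕ} (hj : j ≤ h) :
    (#{S ∈ powersetCard j univ | Odd #(V ∩ S)} : ℝ) / h.choose j = pjl h j #V := by
  have hV : #V ≤ h := by simpa using card_le_univ V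
  rw [card_filter_odd_card_inter, pjl, Nat.cast_sum, sum_div]
  refine sum_congr rfl fun i hi => ?_
  have hi := mem_Icc.mp (mem_filter.mp hi).1
  rw [div_eq_div_iff (by exact_mod_cast (Nat.choose_pos hj).ne')
    (by exact_mod_cast (Nat.choose_pos hV).ne')]
  have := Nat.choose_mul_choose_mul_choose_comm (h := h) (hi.2.trans (min_le_left _ _))
    (hi.2.trans (min_le_right _ _))
  rw [mul_comm, mul_comm _ (h.choose j : ℝ)]
  exact_mod_cast this

end OddIntersections

section ColumnDistribution

variable {h : ℕ} (dmax : ℕ) (Ω : ℕ → ℝ)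

lemma sum_colP_eq (T : Finset (Fin h → ZMod 2)) :
    ∑ c ∈ T, colP dmax Ω c =
      ∑ j ∈ Icc 1 dmax, Ω j * (#{c ∈ T | hammingNorm c = j} / h.choose j) := by
  have hcol (c : Fin h → ZMod 2) : colP dmax Ω c =
      ∑ j ∈ Icc 1 dmax, if hammingNorm c = j then Ω j / h.choose j else 0 := by
    simp only [sum_ite_eq, colP, mem_Icc]
  rw [sum_congr rfl fun c _ => hcol c, sum_comm]
  refine sum_congr rfl fun j _ => ?_
  rw [← sum_filter, sum_const, nsmul_eq_mul, mul_div_assoc', mul_comm, mul_div_assoc]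

lemma sum_colP_eq_one (hΩsum : ∑ j ∈ Icc 1 dmax, Ω j = 1) (hdh : dmax ≤ h) :
    ∑ c : Fin h → ZMod 2, colP dmax Ω c = 1 := by
  rw [sum_colP_eq, ← hΩsum]
  refine sum_congr rfl fun j hj => ?_
  rw [card_filter_hammingNorm_eq, Fintype.card_fin, div_self, mul_one]
  exact_mod_cast (Nat.choose_pos ((mem_Icc.mp hj).2.trans hdh)).ne'

lemma sum_colP_dotProduct_ne_zero (hdh : dmax ≤ h) (v : Fin h → ZMod 2) :
    ∑ c ∈ {c | v ⬝ᵥ c ≠ 0}, colP dmax Ω c = pl dmax Ω h (hammingNorm v) := by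
  rw [sum_colP_eq, pl]
  refine sum_congr rfl fun j hj => ?_
  rw [hammingNorm_eq_card_supportEquiv,
    ← card_filter_odd_card_inter_div_choose _ ((mem_Icc.mp hj).2.trans hdh)]
  congr 3
  refine card_equiv supportEquiv fun c => ?_
  simp only [filter_filter, mem_filter, mem_univ, true_and, mem_powersetCard_univ,
    dotProduct_ne_zero_iff_odd_card_inter, hammingNorm_eq_card_supportEquiv]
  exact and_comm

lemma pl_zero : pl dmax Ω h 0 = 0 := by
  simp [pl, pjl]

end ColumnDistribution

section Binomial

variable {α : Type*} [Fintype α] [DecidableEq α] (f : α → ℝ) (A : Finset α) {n : ℕ}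

lemma sum_prod_filter_mem_eq (S : Finset (Fin n)) :
    ∑ c ∈ {c : Fin n → α | ({i | c i ∈ A} : Finset (Fin n)) = S}, ∏ i, f (c i) =
      (∑ a ∈ A, f a) ^ #S * (∑ a ∈ Aᶜ, f a) ^ (n - #S) := by
  have hfiber : ({c : Fin n → α | ({i | c i ∈ A} : Finset (Fin n)) = S} : Finset _) =
      Fintype.piFinset fun i => if i ∈ S then A else Aᶜ := by
    ext c
    simp only [mem_filter, mem_univ, true_and, Fintype.mem_piFinset, Finset.ext_iff]
    refine forall_congr' fun i => ?_
    by_cases hi : i ∈ S <;> simp [hi]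
  rw [hfiber, ← prod_univ_sum]
  simp only [apply_ite (fun s : Finset α => ∑ a ∈ s, f a)]
  rw [prod_ite, prod_const, prod_const, filter_mem_eq_inter, univ_inter, filter_not,
    filter_mem_eq_inter, univ_inter, ← compl_eq_univ_sdiff, card_compl, Fintype.card_fin]

theorem sum_prod_filter_card_mem_eq (hf : ∑ a, f a = 1) (d : ℕ) :
    ∑ c ∈ {c : Fin n → α | #{i | c i ∈ A} = d}, ∏ i, f (c i) =
      n.choose d * (∑ a ∈ A, f a) ^ d * (1 - ∑ a ∈ A, f a) ^ (n - d) := by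
  rw [← sum_fiberwise_of_maps_to (s := {c : Fin n → α | #{i | c i ∈ A} = d})
    (g := fun c => ({i | c i ∈ A} : Finset (Fin n))) (t := powersetCard d univ)
    fun c hc => mem_powersetCard_univ.mpr (mem_filter.mp hc).2]
  have hcompl : ∑ a ∈ Aᶜ, f a = 1 - ∑ a ∈ A, f a := by
    rw [← hf, ← sum_add_sum_compl A f, add_sub_cancel_left]
  have hfiber (S) (hS : S ∈ powersetCard d univ) :
      ∑ c ∈ {c : Fin n → α | #{i | c i ∈ A} = d}
          with ({i | c i ∈ A} : Finset (Fin n)) = S,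
        ∏ i, f (c i) = (∑ a ∈ A, f a) ^ d * (1 - ∑ a ∈ A, f a) ^ (n - d) := by
    rw [filter_filter, ← mem_powersetCard_univ.mp hS, ← hcompl, ← sum_prod_filter_mem_eq]
    congr 1
    exact filter_congr fun c _ => ⟨fun hc => hc.2, fun hc => ⟨hc ▸ rfl, hc⟩⟩
  rw [sum_congr rfl hfiber, sum_const, card_powersetCard, card_univ, Fintype.card_fin,
    nsmul_eq_mul, mul_assoc]

end Binomial

section Kernel

open Matrix

variable {K m ι : Type*} [Field K] [Fintype ι] [DecidableEq ι] {v : ι → K}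

lemma Matrix.mulVec_left_surjective (hv : v ≠ 0) :
    Function.Surjective fun A : Matrix m ι K => A *ᵥ v := by
  obtain ⟨j, hj⟩ := Function.ne_iff.mp hv
  have hdot : Pi.single j (v j)⁻¹ ⬝ᵥ v = 1 := by rw [single_dotProduct, inv_mul_cancel₀ hj]
  exact fun y => ⟨vecMulVec y (Pi.single j (v j)⁻¹),
    (vecMulVec_mulVec _ _ _).trans (by rw [hdot, MulOpposite.op_one, one_smul])⟩

lemma Matrix.card_filter_mulVec_eq_zero_mul [Fintype K] [DecidableEq K] [Fintype m]
    [DecidableEq m] (hv : v ≠ 0) :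
    #{A : Matrix m ι K | A *ᵥ v = 0} * Fintype.card K ^ Fintype.card m =
      Fintype.card K ^ (Fintype.card m * Fintype.card ι) := by
  let f := mulVec.addMonoidHomLeft (m := m) v
  have hker : Nat.card f.ker = #{A : Matrix m ι K | A *ᵥ v = 0} := by
    rw [← Fintype.card_subtype, ← Nat.card_eq_fintype_card]
    exact Nat.card_congr (Equiv.subtypeEquivRight fun A => f.mem_ker)
  have key := f.ker.card_mul_index
  rw [AddSubgroup.index_ker, (AddMonoidHom.range_eq_top (f := f)).mpr
    (mulVec_left_surjective hv), AddSubgroup.card_top, hker] at key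
  simpa [Nat.card_eq_fintype_card, Matrix, Fintype.card_fun, ← pow_mul, mul_comm] using key

end Kernel

lemma sum_sum_mul_card_filter_and {R α β γ : Type*} [CommSemiring R] [Fintype α] [Fintype β]
    [Fintype γ] (f : α → R) (g : β → R) (P : α → γ → Prop) (Q : β → γ → Prop)
    [∀ a v, Decidable (P a v)] [∀ b v, Decidable (Q b v)] :
    ∑ a, ∑ b, f a * g b * #{v | P a v ∧ Q b v} =
      ∑ v, (∑ a with P a v, f a) * ∑ b with Q b v, g b := by
  calc _ = ∑ a, ∑ b, ∑ v, (if P a v then f a else 0) * (if Q b v then g b else 0) := by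
        refine sum_congr rfl fun a _ => sum_congr rfl fun b _ => ?_
        rw [natCast_card_filter, mul_sum]
        refine sum_congr rfl fun v _ => ?_
        by_cases P a v <;> by_cases Q b v <;> simp [*]
    _ = ∑ v, ∑ a, ∑ b, (if P a v then f a else 0) * (if Q b v then g b else 0) :=
        (sum_congr rfl fun _ _ => sum_comm).trans sum_comm
    _ = _ := by simp only [sum_filter, sum_mul_sum]

section RaptorEnsemble

open Matrix

variable {h : ℕ}

lemma sum_filter_mulVec_eq_zero_half_pow (m : ℕ) {v : Fin h → ZMod 2} (hv : v ≠ 0) :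
    ∑ H : Matrix (Fin m) (Fin h) (ZMod 2) with H *ᵥ v = 0, (1 / 2 : ℝ) ^ (m * h) =
      (1 / 2) ^ m := by
  have hcard : (#{H : Matrix (Fin m) (Fin h) (ZMod 2) | H *ᵥ v = 0} : ℝ) * 2 ^ m =
      2 ^ (m * h) := by
    exact_mod_cast (by simpa using card_filter_mulVec_eq_zero_mul (m := Fin m) hv)
  rw [sum_const, nsmul_eq_mul, one_div, inv_pow, inv_pow]
  field_simp
  linear_combination hcard

lemma sum_filter_hammingNorm_vecMul_eq (dmax n : ℕ) (Ω : ℕ → ℝ)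
    (hΩsum : ∑ j ∈ Icc 1 dmax, Ω j = 1) (hdh : dmax ≤ h) (v : Fin h → ZMod 2) (d : ℕ) :
    ∑ G : Matrix (Fin h) (Fin n) (ZMod 2) with hammingNorm (v ᵥ* G) = d,
        ∏ i, colP dmax Ω (fun r => G r i) =
      n.choose d * pl dmax Ω h (hammingNorm v) ^ d *
        (1 - pl dmax Ω h (hammingNorm v)) ^ (n - d) := by
  rw [← sum_colP_dotProduct_ne_zero dmax Ω hdh v,
    ← sum_prod_filter_card_mem_eq _ _ (sum_colP_eq_one dmax Ω hΩsum hdh)]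
  exact sum_equiv (Equiv.piComm _) (fun G => by simp only [mem_filter, mem_univ, true_and]; rfl)
    fun _ _ => rfl

end RaptorEnsemble

theorem stmt_3_general (dmax h k n : ℕ) (Ω : ℕ → ℝ)
    (hΩsum : ∑ j ∈ Finset.Icc 1 dmax, Ω j = 1)
    (hkh : k ≤ h) (hdh : dmax ≤ h)
    (d : ℕ) (hd1 : 1 ≤ d) :
    ∑ H : Matrix (Fin (h - k)) (Fin h) (ZMod 2), ∑ G : Matrix (Fin h) (Fin n) (ZMod 2),
      (((1 / 2 : ℝ) ^ ((h - k) * h) * ∏ i : Fin n, colP dmax Ω (fun r => G r i)) *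
        ((Finset.univ.filter (fun v : Fin h → ZMod 2 =>
          Matrix.mulVec H v = 0 ∧ hammingNorm (Matrix.vecMul v G) = d)).card : ℝ)) =
    (n.choose d : ℝ) * (2 : ℝ) ^ (-((h : ℤ) - (k : ℤ))) *
      ∑ l ∈ Finset.Icc 1 h,
        ((h.choose l : ℝ)) * (pl dmax Ω h l) ^ d * (1 - pl dmax Ω h l) ^ (n - d) := by
  set B : ℕ → ℝ := fun l => n.choose d * pl dmax Ω h l ^ d * (1 - pl dmax Ω h l) ^ (n - d)
  have hB0 : B 0 = 0 := by simp [B, pl_zero, zero_pow (by omega : d ≠ 0)]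
  have hscale : (1 / 2 : ℝ) ^ (h - k) = 2 ^ (-((h : ℤ) - (k : ℤ))) := by
    rw [← Nat.cast_sub hkh, zpow_neg, zpow_natCast, one_div_pow, one_div]
  calc _ = ∑ v : Fin h → ZMod 2, 2 ^ (-((h : ℤ) - (k : ℤ))) * B (hammingNorm v) := by
        refine (sum_sum_mul_card_filter_and _ _ _ _).trans (sum_congr rfl fun v _ => ?_)
        rw [sum_filter_hammingNorm_vecMul_eq dmax n Ω hΩsum hdh]
        rcases eq_or_ne v 0 with rfl | hv
        · simp [hB0, pl_zero, zero_pow (by omega : d ≠ 0)]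
        · rw [sum_filter_mulVec_eq_zero_half_pow _ hv, hscale]
    _ = 2 ^ (-((h : ℤ) - (k : ℤ))) * ∑ l ∈ range (h + 1), h.choose l * B l := by
        simp only [← mul_sum, sum_hammingNorm_eq, Fintype.card_fin, nsmul_eq_mul]
    _ = _ := by
        rw [← sum_subset (s₁ := Icc 1 h) (fun l hl => by simp at hl ⊢; omega)
          fun l hl hl' => by obtain rfl : l = 0 := by simp at hl hl'; omega
                             rw [hB0, mul_zero]]
        simp only [B, mul_sum]
        exact sum_congr rfl fun _ _ => by ring

/-- Theorem 1: in the fixed-rate Raptor ensemble with parameters `(h,k,n)` (outer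
parity-check matrix `H` with i.i.d. uniform entries in `F₂`, independent random LT
generator matrix `G`), for every `d ≥ 1` the expected number of intermediate words
`v ∈ F₂^h` with `Hv = 0` and `wt(vᵀG) = d` equals
`A_d = C(n,d)·2^{−(h−k)}·Σ_{l=1}^{h} C(h,l)·p_l^d·(1−p_l)^{n−d}`. -/
theorem stmt_3 (dmax h k n : ℕ) (Ω : ℕ → ℝ)
    (hΩpos : ∀ j ∈ Finset.Icc 1 dmax, 0 ≤ Ω j)
    (hΩsum : ∑ j ∈ Finset.Icc 1 dmax, Ω j = 1)
    (hpos : 0 < h) (hkpos : 0 < k) (hnpos : 0 < n) (hkh : k ≤ h) (hdh : dmax ≤ h)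
    (d : ℕ) (hd1 : 1 ≤ d) :
    ∑ H : Matrix (Fin (h - k)) (Fin h) (ZMod 2), ∑ G : Matrix (Fin h) (Fin n) (ZMod 2),
      (((1 / 2 : ℝ) ^ ((h - k) * h) * ∏ i : Fin n, colP dmax Ω (fun r => G r i)) *
        ((Finset.univ.filter (fun v : Fin h → ZMod 2 =>
          Matrix.mulVec H v = 0 ∧ hammingNorm (Matrix.vecMul v G) = d)).card : ℝ)) =
    (n.choose d : ℝ) * (2 : ℝ) ^ (-((h : ℤ) - (k : ℤ))) *
      ∑ l ∈ Finset.Icc 1 h,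
        ((h.choose l : ℝ)) * (pl dmax Ω h l) ^ d * (1 - pl dmax Ω h l) ^ (n - d) :=
  stmt_3_general dmax h k n Ω hΩsum hkh hdh d hd1
end

section
/- (Lemma 1, derivative of the growth rate) Let Ω be an LT output degree distribution, r_i ∈ (0,1], r_o ∈ (0,1). Let δ₀ ∈ (0,1) and let λ₀ : (0,1) → (0,1) be a function that is differentiable at δ₀, whose value λ₀(δ₀) satisfies 0 < ρ_{λ₀(δ₀)} < 1 and the stationarity condition ∂f/∂λ(δ₀, λ₀(δ₀)) = 0, where ∂f/∂λ(δ,λ) = r_i·log₂((1−λ)/λ) + (ρ′_λ / ln 2)·(δ − ρ_λ)/(ρ_λ·(1−ρ_λ)) with ρ′_λ = Σ_{j=1}^{d_max} Ω_j·j·(1−2λ)^{j−1}. Then the function δ ↦ H_b(δ) − r_i·(1 − r_o) + f(δ, λ₀(δ)) is differentiable at δ₀ with derivative log₂((1−δ₀)/δ₀) + log₂( ρ_{λ₀(δ₀)} / (1 − ρ_{λ₀(δ₀)}) ). -/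
open Finset Filter

/-- Binary entropy function (base-2 logarithms). -/
noncomputable def Hb (x : ℝ) : ℝ := -x * Real.logb 2 x - (1 - x) * Real.logb 2 (1 - x)

/-- `ρ_λ = (1/2)·Σ_{j=1}^{dmax} Ω_j·(1 − (1 − 2λ)^j)`. -/
noncomputable def rho (dmax : ℕ) (Ω : ℕ → ℝ) (lam : ℝ) : ℝ :=
  (1 / 2) * ∑ j ∈ Finset.Icc 1 dmax, Ω j * (1 - (1 - 2 * lam) ^ j)

/-- `ρ′_λ = Σ_{j=1}^{dmax} Ω_j·j·(1−2λ)^{j−1}`. -/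
noncomputable def rho' (dmax : ℕ) (Ω : ℕ → ℝ) (lam : ℝ) : ℝ :=
  ∑ j ∈ Finset.Icc 1 dmax, Ω j * (j : ℝ) * (1 - 2 * lam) ^ (j - 1)

/-- `f(δ,λ) = r_i·H_b(λ) + δ·log₂ ρ_λ + (1−δ)·log₂(1−ρ_λ)`. -/
noncomputable def ff (dmax : ℕ) (Ω : ℕ → ℝ) (ri δ lam : ℝ) : ℝ :=
  ri * Hb lam + δ * Real.logb 2 (rho dmax Ω lam) + (1 - δ) * Real.logb 2 (1 - rho dmax Ω lam)

/-
The objective `f(δ, λ) = g(λ) + δ·h(λ)` is affine in `δ`, with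
`g(λ) = r_i·H_b(λ) + log₂(1 − ρ_λ)` and `h(λ) = log₂ ρ_λ − log₂(1 − ρ_λ)`.
By the chain rule, `δ ↦ f(δ, λ₀(δ))` has derivative `h(λ₀(δ₀)) + ∂f/∂λ(δ₀, λ₀(δ₀))·λ₀'(δ₀)`,
and the stationarity condition kills the second term (envelope theorem). What remains is
`log₂(ρ/(1 − ρ))`, to which the derivative `log₂((1 − δ₀)/δ₀)` of `H_b` is added.
-/

theorem HasDerivAt.logb {f : ℝ → ℝ} {f' x : ℝ} (b : ℝ) (hf : HasDerivAt f f' x)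
    (hx : f x ≠ 0) : HasDerivAt (fun y => Real.logb b (f y)) (f' / (f x * Real.log b)) x := by
  simpa only [Real.logb, div_div] using (hf.log hx).div_const (Real.log b)

theorem Hb_eq_binEntropy_div (x : ℝ) : Hb x = Real.binEntropy x / Real.log 2 := by
  simp only [Hb, Real.binEntropy, Real.logb, Real.log_inv]
  ring

theorem hasDerivAt_Hb {x : ℝ} (h0 : x ≠ 0) (h1 : x ≠ 1) :
    HasDerivAt Hb (Real.logb 2 ((1 - x) / x)) x := by
  have h1' : 1 - x ≠ 0 := sub_ne_zero.mpr h1.symm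
  rw [show Hb = fun x => Real.binEntropy x / Real.log 2 from funext Hb_eq_binEntropy_div,
    Real.logb, Real.log_div h1' h0]
  exact (Real.hasDerivAt_binEntropy h0 h1).div_const _

theorem hasDerivAt_rho (dmax : ℕ) (Ω : ℕ → ℝ) (l : ℝ) :
    HasDerivAt (rho dmax Ω) (rho' dmax Ω l) l := by
  have hterm (j : ℕ) : HasDerivAt (fun l : ℝ => Ω j * (1 - (1 - 2 * l) ^ j))
      (Ω j * (j : ℝ) * (1 - 2 * l) ^ (j - 1) * 2) l := by
    have hlin : HasDerivAt (fun l : ℝ => 1 - 2 * l) (-2) l := by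
      simpa using ((hasDerivAt_id l).const_mul (2 : ℝ)).const_sub 1
    exact (((hlin.pow j).const_sub 1).const_mul (Ω j)).congr_deriv (by ring)
  have hsum := (HasDerivAt.fun_sum (u := Icc 1 dmax) fun j _ => hterm j).const_mul (1 / 2 : ℝ)
  refine hsum.congr_deriv ?_
  rw [rho', Finset.mul_sum]
  exact Finset.sum_congr rfl fun j _ => by ring

theorem hasDerivAt_add_mul_comp_of_stationary {g h lam : ℝ → ℝ} {g' h' lam' δ₀ : ℝ}
    (hg : HasDerivAt g g' (lam δ₀)) (hh : HasDerivAt h h' (lam δ₀))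
    (hlam : HasDerivAt lam lam' δ₀) (hstat : g' + δ₀ * h' = 0) :
    HasDerivAt (fun δ => g (lam δ) + δ * h (lam δ)) (h (lam δ₀)) δ₀ := by
  have hcomp := (hg.comp δ₀ hlam).add ((hasDerivAt_id δ₀).mul (hh.comp δ₀ hlam))
  refine hcomp.congr_deriv ?_
  simp only [Function.comp_apply, id_eq]
  linear_combination lam' * hstat

section GrowthRate

variable (dmax : ℕ) (Ω : ℕ → ℝ) (ri : ℝ)

theorem ff_eq_add_mul (δ l : ℝ) :
    ff dmax Ω ri δ l = (ri * Hb l + Real.logb 2 (1 - rho dmax Ω l)) +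
      δ * (Real.logb 2 (rho dmax Ω l) - Real.logb 2 (1 - rho dmax Ω l)) := by
  rw [ff]
  ring

variable {dmax Ω ri}

theorem hasDerivAt_ff_comp_of_stationary {lam : ℝ → ℝ} {lam' δ₀ : ℝ}
    (hlam : HasDerivAt lam lam' δ₀) (hl0 : lam δ₀ ≠ 0) (hl1 : lam δ₀ ≠ 1)
    (hρ0 : rho dmax Ω (lam δ₀) ≠ 0) (hρ1 : 1 - rho dmax Ω (lam δ₀) ≠ 0)
    (hstat : ri * Real.logb 2 ((1 - lam δ₀) / lam δ₀) +
        (rho' dmax Ω (lam δ₀) / Real.log 2) *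
          (δ₀ - rho dmax Ω (lam δ₀)) /
            (rho dmax Ω (lam δ₀) * (1 - rho dmax Ω (lam δ₀))) = 0) :
    HasDerivAt (fun δ => ff dmax Ω ri δ (lam δ))
      (Real.logb 2 (rho dmax Ω (lam δ₀)) - Real.logb 2 (1 - rho dmax Ω (lam δ₀))) δ₀ := by
  have hρ := hasDerivAt_rho dmax Ω (lam δ₀)
  have hlogρ := hρ.logb 2 hρ0
  have hlog1ρ := (hρ.const_sub 1).logb 2 hρ1
  simp only [ff_eq_add_mul]
  refine hasDerivAt_add_mul_comp_of_stationary
    (((hasDerivAt_Hb hl0 hl1).const_mul ri).add hlog1ρ) (hlogρ.sub hlog1ρ) hlam ?_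
  have hlog2 : Real.log 2 ≠ 0 := Real.log_ne_zero_of_pos_of_ne_one two_pos (by norm_num)
  rw [← hstat]
  field_simp
  ring

end GrowthRate

theorem stmt_5_general (dmax : ℕ) (Ω : ℕ → ℝ)
    (ri ro : ℝ)
    (δ₀ : ℝ) (hδ₀ : δ₀ ∈ Set.Ioo (0 : ℝ) 1)
    (lam : ℝ → ℝ) (lam' : ℝ)
    (hmaps : ∀ δ ∈ Set.Ioo (0 : ℝ) 1, lam δ ∈ Set.Ioo (0 : ℝ) 1)
    (hdiff : HasDerivAt lam lam' δ₀)
    (hρ : rho dmax Ω (lam δ₀) ∈ Set.Ioo (0 : ℝ) 1)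
    (hstat : ri * Real.logb 2 ((1 - lam δ₀) / lam δ₀) +
        (rho' dmax Ω (lam δ₀) / Real.log 2) *
          (δ₀ - rho dmax Ω (lam δ₀)) /
            (rho dmax Ω (lam δ₀) * (1 - rho dmax Ω (lam δ₀))) = 0) :
    HasDerivAt (fun δ => Hb δ - ri * (1 - ro) + ff dmax Ω ri δ (lam δ))
      (Real.logb 2 ((1 - δ₀) / δ₀) +
        Real.logb 2 (rho dmax Ω (lam δ₀) / (1 - rho dmax Ω (lam δ₀)))) δ₀ := by
  obtain ⟨hδ0, hδ1⟩ := hδ₀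
  obtain ⟨hl0, hl1⟩ := hmaps δ₀ ⟨hδ0, hδ1⟩
  obtain ⟨hρ0, hρ1⟩ := hρ
  have hHb := hasDerivAt_Hb hδ0.ne' hδ1.ne
  have hff := hasDerivAt_ff_comp_of_stationary hdiff hl0.ne' hl1.ne hρ0.ne'
    (sub_ne_zero.mpr hρ1.ne') hstat
  rw [Real.logb_div hρ0.ne' (sub_ne_zero.mpr hρ1.ne')]
  exact (hHb.sub_const _).add hff

/-- Lemma 1 (derivative of the growth rate): if `λ₀ : (0,1) → (0,1)` is differentiable
at `δ₀ ∈ (0,1)`, `0 < ρ_{λ₀(δ₀)} < 1` and `∂f/∂λ(δ₀, λ₀(δ₀)) = 0`, then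
`δ ↦ H_b(δ) − r_i·(1 − r_o) + f(δ, λ₀(δ))` is differentiable at `δ₀` with derivative
`log₂((1−δ₀)/δ₀) + log₂(ρ_{λ₀(δ₀)}/(1 − ρ_{λ₀(δ₀)}))`. -/
theorem stmt_5 (dmax : ℕ) (Ω : ℕ → ℝ)
    (hΩpos : ∀ j ∈ Finset.Icc 1 dmax, 0 ≤ Ω j)
    (hΩsum : ∑ j ∈ Finset.Icc 1 dmax, Ω j = 1)
    (ri ro : ℝ) (hri : ri ∈ Set.Ioc (0 : ℝ) 1) (hro : ro ∈ Set.Ioo (0 : ℝ) 1)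
    (δ₀ : ℝ) (hδ₀ : δ₀ ∈ Set.Ioo (0 : ℝ) 1)
    (lam : ℝ → ℝ) (lam' : ℝ)
    (hmaps : ∀ δ ∈ Set.Ioo (0 : ℝ) 1, lam δ ∈ Set.Ioo (0 : ℝ) 1)
    (hdiff : HasDerivAt lam lam' δ₀)
    (hρ : rho dmax Ω (lam δ₀) ∈ Set.Ioo (0 : ℝ) 1)
    (hstat : ri * Real.logb 2 ((1 - lam δ₀) / lam δ₀) +
        (rho' dmax Ω (lam δ₀) / Real.log 2) *
          (δ₀ - rho dmax Ω (lam δ₀)) /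
            (rho dmax Ω (lam δ₀) * (1 - rho dmax Ω (lam δ₀))) = 0) :
    HasDerivAt (fun δ => Hb δ - ri * (1 - ro) + ff dmax Ω ri δ (lam δ))
      (Real.logb 2 ((1 - δ₀) / δ₀) +
        Real.logb 2 (rho dmax Ω (lam δ₀) / (1 - rho dmax Ω (lam δ₀)))) δ₀ :=
  stmt_5_general dmax Ω ri ro δ₀ hδ₀ lam lam' hmaps hdiff hρ hstat
end

section
/- (Right-continuity of f_max at 0, key step in the proof of Theorem 3) Let Ω be an LT output degree distribution and r_i ∈ (0,1]. Then lim_{δ→0⁺} f_max(δ) = f_max(0), i.e., lim_{δ→0⁺} sup_{λ ∈ 𝒟_λ} [ r_i·H_b(λ) + δ·log₂ ρ_λ + (1−δ)·log₂(1−ρ_λ) ] = sup_{λ ∈ 𝒟_λ} [ r_i·H_b(λ) + log₂(1−ρ_λ) ]. -/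
open Finset Filter

open scoped Classical in
/-- The domain `𝒟_λ`: `(0,1)` if `Ω_j = 0` for every even `j`, and `(0,1]` otherwise. -/
noncomputable def Dset (dmax : ℕ) (Ω : ℕ → ℝ) : Set ℝ :=
  if ∀ j ∈ Finset.Icc 1 dmax, Even j → Ω j = 0 then Set.Ioo 0 1 else Set.Ioc 0 1

/-- `f_max(δ) = sup_{λ ∈ 𝒟_λ} f(δ,λ)`. -/
noncomputable def fmax (dmax : ℕ) (Ω : ℕ → ℝ) (ri δ : ℝ) : ℝ :=
  sSup (ff dmax Ω ri δ '' Dset dmax Ω)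

/-- Growth rate `G(δ) = H_b(δ) − r_i·(1 − r_o) + f_max(δ)`. -/
noncomputable def Gr (dmax : ℕ) (Ω : ℕ → ℝ) (ri ro δ : ℝ) : ℝ :=
  Hb δ - ri * (1 - ro) + fmax dmax Ω ri δ

/-- Normalized typical minimum distance `δ*`: `0` if `lim_{δ→0⁺} G(δ) ≥ 0`, and
`inf {δ > 0 : G(δ) > 0}` otherwise. -/
noncomputable def deltaStar (dmax : ℕ) (Ω : ℕ → ℝ) (ri ro : ℝ) : ℝ :=
  if 0 ≤ limUnder (nhdsWithin 0 (Set.Ioi 0)) (Gr dmax Ω ri ro) then 0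
  else sInf {δ : ℝ | 0 < δ ∧ 0 < Gr dmax Ω ri ro δ}

/-- `Hb` equals `binEntropy / log 2`. -/
lemma Hb_le_one (x : ℝ) : Hb x ≤ 1 := by
  have h : Hb x = Real.binEntropy x / Real.log 2 := by
    unfold Hb Real.binEntropy Real.logb
    rw [Real.log_inv, Real.log_inv]
    ring
  rw [h]
  have h2 : (0:ℝ) < Real.log 2 := Real.log_pos (by norm_num)
  rw [div_le_one h2]
  exact Real.binEntropy_le_log_two

lemma Dset_subset (dmax : ℕ) (Ω : ℕ → ℝ) : Dset dmax Ω ⊆ Set.Ioc 0 1 := by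
  unfold Dset
  split
  · exact fun x hx => ⟨hx.1, hx.2.le⟩
  · exact subset_rfl

lemma Dset_nonempty (dmax : ℕ) (Ω : ℕ → ℝ) : (Dset dmax Ω).Nonempty := by
  unfold Dset
  split
  · exact ⟨1/2, by norm_num, by norm_num⟩
  · exact ⟨1/2, by norm_num, by norm_num⟩

lemma rho_mem (dmax : ℕ) (Ω : ℕ → ℝ)
    (hΩpos : ∀ j ∈ Finset.Icc 1 dmax, 0 ≤ Ω j) {lam : ℝ}
    (hlam : lam ∈ Set.Ioc (0:ℝ) 1) :
    0 ≤ rho dmax Ω lam ∧ rho dmax Ω lam ≤ (∑ j ∈ Finset.Icc 1 dmax, Ω j) := by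
  have hterm : ∀ j ∈ Finset.Icc 1 dmax,
      0 ≤ Ω j * (1 - (1 - 2 * lam) ^ j) ∧ Ω j * (1 - (1 - 2 * lam) ^ j) ≤ 2 * Ω j := by
    intro j hj
    have habs : |1 - 2 * lam| ≤ 1 := by
      rw [abs_le]; constructor <;> nlinarith [hlam.1, hlam.2]
    have hp : |(1 - 2 * lam) ^ j| ≤ 1 := by
      rw [abs_pow]; exact pow_le_one₀ (abs_nonneg _) habs
    rw [abs_le] at hp
    have hΩ := hΩpos j hj
    constructor
    · apply mul_nonneg hΩ; linarith [hp.2]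
    · nlinarith [hp.1]
  constructor
  · apply mul_nonneg (by norm_num)
    exact Finset.sum_nonneg fun j hj => (hterm j hj).1
  · unfold rho
    have := Finset.sum_le_sum fun j hj => (hterm j hj).2
    rw [← Finset.mul_sum] at this
    linarith

lemma ff_le (dmax : ℕ) (Ω : ℕ → ℝ)
    (hΩpos : ∀ j ∈ Finset.Icc 1 dmax, 0 ≤ Ω j)
    (hΩsum : ∑ j ∈ Finset.Icc 1 dmax, Ω j = 1)
    {ri : ℝ} (hri : 0 < ri) {δ lam : ℝ} (hδ : 0 ≤ δ) (hδ1 : δ ≤ 1)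
    (hlam : lam ∈ Set.Ioc (0:ℝ) 1) :
    ff dmax Ω ri δ lam ≤ (1 - δ) * ff dmax Ω ri 0 lam + δ * ri := by
  obtain ⟨h0, h1⟩ := rho_mem dmax Ω hΩpos hlam
  rw [hΩsum] at h1
  have hl1 : Real.logb 2 (rho dmax Ω lam) ≤ 0 :=
    Real.logb_nonpos (by norm_num) h0 h1
  have hHb := Hb_le_one lam
  have key : ri * Hb lam + Real.logb 2 (rho dmax Ω lam) - ri ≤ 0 := by nlinarith
  have h2 := mul_le_mul_of_nonneg_left key hδ
  unfold ff
  nlinarith [h2]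

lemma ff_le_ri (dmax : ℕ) (Ω : ℕ → ℝ)
    (hΩpos : ∀ j ∈ Finset.Icc 1 dmax, 0 ≤ Ω j)
    (hΩsum : ∑ j ∈ Finset.Icc 1 dmax, Ω j = 1)
    {ri : ℝ} (hri : 0 < ri) {δ lam : ℝ} (hδ : 0 ≤ δ) (hδ1 : δ ≤ 1)
    (hlam : lam ∈ Set.Ioc (0:ℝ) 1) :
    ff dmax Ω ri δ lam ≤ ri := by
  obtain ⟨h0, h1⟩ := rho_mem dmax Ω hΩpos hlam
  rw [hΩsum] at h1
  have hl1 : Real.logb 2 (rho dmax Ω lam) ≤ 0 :=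
    Real.logb_nonpos (by norm_num) h0 h1
  have hl2 : Real.logb 2 (1 - rho dmax Ω lam) ≤ 0 :=
    Real.logb_nonpos (by norm_num) (by linarith) (by linarith)
  have hHb := Hb_le_one lam
  unfold ff
  nlinarith

lemma bdd_image (dmax : ℕ) (Ω : ℕ → ℝ)
    (hΩpos : ∀ j ∈ Finset.Icc 1 dmax, 0 ≤ Ω j)
    (hΩsum : ∑ j ∈ Finset.Icc 1 dmax, Ω j = 1)
    {ri : ℝ} (hri : 0 < ri) {δ : ℝ} (hδ : 0 ≤ δ) (hδ1 : δ ≤ 1) :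
    BddAbove (ff dmax Ω ri δ '' Dset dmax Ω) := by
  refine ⟨ri, ?_⟩
  rintro y ⟨lam, hlam, rfl⟩
  exact ff_le_ri dmax Ω hΩpos hΩsum hri hδ hδ1 (Dset_subset dmax Ω hlam)

/-- Right-continuity of `f_max` at `0` (key step in the proof of Theorem 3):
`lim_{δ→0⁺} f_max(δ) = f_max(0)`. -/
theorem stmt_8 (dmax : ℕ) (Ω : ℕ → ℝ)
    (hΩpos : ∀ j ∈ Finset.Icc 1 dmax, 0 ≤ Ω j)
    (hΩsum : ∑ j ∈ Finset.Icc 1 dmax, Ω j = 1)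
    (ri : ℝ) (hri : ri ∈ Set.Ioc (0 : ℝ) 1) :
    Tendsto (fun δ => fmax dmax Ω ri δ) (nhdsWithin 0 (Set.Ioi 0))
      (nhds (fmax dmax Ω ri 0)) := by
  have hriv := hri.1
  have hDne := Dset_nonempty dmax Ω
  have hIne : (ff dmax Ω ri 0 '' Dset dmax Ω).Nonempty := hDne.image _
  have hbdd0 := bdd_image dmax Ω hΩpos hΩsum hriv le_rfl zero_le_one
  have hfmax0_le : fmax dmax Ω ri 0 ≤ ri := by
    apply csSup_le hIne
    rintro y ⟨lam, hlam, rfl⟩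
    exact ff_le_ri dmax Ω hΩpos hΩsum hriv le_rfl zero_le_one (Dset_subset dmax Ω hlam)
  -- eventually δ ∈ (0,1)
  have hev01 : ∀ᶠ δ in nhdsWithin (0:ℝ) (Set.Ioi 0), δ ∈ Set.Ioo (0:ℝ) 1 := by
    have h1 : ∀ᶠ δ in nhdsWithin (0:ℝ) (Set.Ioi 0), δ ∈ Set.Ioi (0:ℝ) :=
      eventually_mem_nhdsWithin
    have h2 : ∀ᶠ δ in nhdsWithin (0:ℝ) (Set.Ioi 0), δ < 1 := by
      apply eventually_nhdsWithin_of_eventually_nhds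
      exact Filter.Tendsto.eventually_lt_const zero_lt_one tendsto_id
    filter_upwards [h1, h2] with δ hδ hδ' using ⟨hδ, hδ'⟩
  rw [tendsto_order]
  constructor
  · -- lower bound
    intro a ha
    obtain ⟨y, ⟨lam, hlam, rfl⟩, hay⟩ := exists_lt_of_lt_csSup hIne ha
    have hcont : Tendsto (fun δ => ff dmax Ω ri δ lam) (nhdsWithin 0 (Set.Ioi 0))
        (nhds (ff dmax Ω ri 0 lam)) := by
      apply Tendsto.mono_left _ nhdsWithin_le_nhds
      have : Continuous (fun δ : ℝ => ff dmax Ω ri δ lam) := by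
        unfold ff; continuity
      exact this.tendsto 0
    have hev : ∀ᶠ δ in nhdsWithin (0:ℝ) (Set.Ioi 0), a < ff dmax Ω ri δ lam :=
      hcont.eventually (eventually_gt_nhds hay)
    filter_upwards [hev, hev01] with δ hδ hδ'
    have hb := bdd_image dmax Ω hΩpos hΩsum hriv hδ'.1.le hδ'.2.le
    exact lt_of_lt_of_le hδ (le_csSup hb ⟨lam, hlam, rfl⟩)
  · -- upper bound
    intro a ha
    have hlim : Tendsto (fun δ : ℝ => (1 - δ) * fmax dmax Ω ri 0 + δ * ri)
        (nhdsWithin 0 (Set.Ioi 0)) (nhds (fmax dmax Ω ri 0)) := by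
      apply Tendsto.mono_left _ nhdsWithin_le_nhds
      have : Continuous (fun δ : ℝ => (1 - δ) * fmax dmax Ω ri 0 + δ * ri) := by
        continuity
      have := this.tendsto 0
      simpa using this
    have hev : ∀ᶠ δ in nhdsWithin (0:ℝ) (Set.Ioi 0),
        (1 - δ) * fmax dmax Ω ri 0 + δ * ri < a :=
      hlim.eventually (eventually_lt_nhds ha)
    filter_upwards [hev, hev01] with δ hδ hδ'
    have hub : fmax dmax Ω ri δ ≤ (1 - δ) * fmax dmax Ω ri 0 + δ * ri := by
      apply csSup_le (hDne.image _)
      rintro y ⟨lam, hlam, rfl⟩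
      have h1 := ff_le dmax Ω hΩpos hΩsum hriv hδ'.1.le hδ'.2.le (Dset_subset dmax Ω hlam)
      have h2 : ff dmax Ω ri 0 lam ≤ fmax dmax Ω ri 0 :=
        le_csSup hbdd0 ⟨lam, hlam, rfl⟩
      nlinarith [hδ'.1, hδ'.2]
    exact lt_of_le_of_lt hub hδ
end
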